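/- Suppose G is connected and M is nonempty. If a state ψ is stationary under the SKW operator U' (U'ψ = ψ), then ψ is antisymmetric on every edge: ψ(a,b) = −ψ(b,a) for every dart (a,b) of G. -/
import Mathlib


open Finset

variable {V : Type*} [Fintype V] [DecidableEq V]

/-- The average of the amplitudes of the state `ψ` at vertex `a`:
`avg_ψ(a) = (1/deg a) * ∑_{b ~ a} ψ(a,b)`. -/
noncomputable def avgQ (G : SimpleGraph V) [DecidableRel G.Adj] (ψ : V → V → ℂ) (a : V) : ℂ :=
  (G.degree a : ℂ)⁻¹ * ∑ b ∈ G.neighborFinset a, ψ a b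

/-- The SKW coin `C'`: applies `-I` at marked vertices and the Grover coin elsewhere. -/
noncomputable def CopSKW (G : SimpleGraph V) [DecidableRel G.Adj] (M : Finset V)
    (ψ : V → V → ℂ) : V → V → ℂ :=
  fun a b => if a ∈ M then -ψ a b else 2 * avgQ G ψ a - ψ a b

/-- The flip-flop shift `S`. -/
def Sop (ψ : V → V → ℂ) : V → V → ℂ :=
  fun a b => ψ b a

/-- The SKW search operator `U' = S ∘ C'`. -/
noncomputable def UopSKW (G : SimpleGraph V) [DecidableRel G.Adj] (M : Finset V)
    (ψ : V → V → ℂ) : V → V → ℂ :=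
  Sop (CopSKW G M ψ)

/-- A state is stationary under the SKW operator `U'` if `U'ψ = ψ` on every dart of `G`. -/
def StationarySKW (G : SimpleGraph V) [DecidableRel G.Adj] (M : Finset V)
    (ψ : V → V → ℂ) : Prop :=
  ∀ a b, G.Adj a b → UopSKW G M ψ a b = ψ a b

/-- For a connected graph with a nonempty marked set, any state stationary under the SKW
operator is antisymmetric on every edge. -/
theorem skw_stationary_antisymmetric (G : SimpleGraph V) [DecidableRel G.Adj]
    (M : Finset V) (hdeg : ∀ v, 0 < G.degree v) (hconn : G.Connected) (hM : M.Nonempty)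
    (ψ : V → V → ℂ) (hstat : StationarySKW G M ψ) :
    ∀ a b, G.Adj a b → ψ a b = -ψ b a := by
  -- key identity from stationarity
  have key : ∀ a b, G.Adj a b →
      (if a ∈ M then -ψ a b else 2 * avgQ G ψ a - ψ a b) = ψ b a := by
    intro a b hab
    have := hstat b a hab.symm
    simpa [UopSKW, Sop, CopSKW] using this
  -- avg is zero at unmarked vertices adjacent to marked vertices
  have hzero : ∀ a b, G.Adj a b → a ∉ M → b ∈ M → avgQ G ψ a = 0 := by
    intro a b hab haM hbM
    have h1 := key a b hab
    have h2 := key b a hab.symm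
    simp only [haM, hbM, if_true, if_false] at h1 h2
    linear_combination (h1 - h2) / 2
  -- avg is equal on adjacent unmarked vertices
  have heq : ∀ a b, G.Adj a b → a ∉ M → b ∉ M → avgQ G ψ a = avgQ G ψ b := by
    intro a b hab haM hbM
    have h1 := key a b hab
    have h2 := key b a hab.symm
    simp only [haM, hbM, if_false] at h1 h2
    linear_combination (h1 - h2) / 2
  -- the function h
  set h : V → ℂ := fun v => if v ∈ M then 0 else avgQ G ψ v with hh
  have hadj : ∀ a b, G.Adj a b → h a = h b := by
    intro a b hab
    by_cases haM : a ∈ M <;> by_cases hbM : b ∈ M <;>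
      simp [hh, haM, hbM]
    · exact (hzero b a hab.symm hbM haM).symm
    · exact hzero a b hab haM hbM
    · exact heq a b hab haM hbM
  have hwalk : ∀ a b : V, G.Reachable a b → h a = h b := by
    intro a b hr
    obtain ⟨w⟩ := hr
    induction w with
    | nil => rfl
    | cons hadj' _ ih => exact (hadj _ _ hadj').trans ih
  obtain ⟨m, hm⟩ := hM
  have hconst : ∀ a : V, h a = 0 := by
    intro a
    have := hwalk a m (hconn.preconnected a m)
    simpa [hh, hm] using this
  intro a b hab
  by_cases haM : a ∈ M
  · have := key a b hab
    simp only [haM, if_true] at this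
    linear_combination -this
  · have hz : avgQ G ψ a = 0 := by
      have := hconst a
      simpa [hh, haM] using this
    have := key a b hab
    simp only [haM, if_false] at this
    rw [hz] at this
    linear_combination -this
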